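/- Let K_1, K_2 be compact Hausdorff spaces, E_1, E_2 Banach spaces, H_1 ⊆ C(K_1, E_1) and H_2 ⊆ C(K_2, E_2) closed subspaces, and T : H_1 → H_2 a bounded linear into isomorphism. Fix a nonzero vector e ∈ E_1 and a sequence (f_i) of real-valued continuous functions on K_1 such that each h_i := f_i ⊗ e (the function x ↦ f_i(x)·e) belongs to H_1. Suppose there exists C ∈ ℝ such that for every n ∈ ℕ and every choice of signs α_1,...,α_n ∈ {−1, 1}, ||∑_{i=1}^n α_i h_i|| < C. Suppose further that there exist y ∈ K_2 and ε > 0 such that ||(T h_i)(y)|| > ε for every i ∈ ℕ. Then E_2 contains a subspace isomorphic to c_0. -/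

import Mathlib

open Set ZeroAtInfty Ordinal

noncomputable section

/-- Iterated Cantor–Bendixson derivative, indexed by ordinals. -/
def cbDeriv {S : Type*} [TopologicalSpace S] (F : Set S) : Ordinal → Set S :=
  fun o => Ordinal.limitRecOn o F (fun _ ih => derivedSet ih)
    (fun o _ ih => ⋂ (β : {β // β < o}), ih β β.2)

/-- The function `f ⊗ e : x ↦ f x • e`. -/
def tensor {K : Type*} [TopologicalSpace K] {E : Type*} [NormedAddCommGroup E]
    [NormedSpace ℝ E] (f : C(K, ℝ)) (e : E) : C(K, E) :=
  ⟨fun x => f x • e, (map_continuous f).smul continuous_const⟩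

/-- `E` contains an isomorphic copy of `c₀`. -/
def ContainsCopyOfC0 (E : Type*) [NormedAddCommGroup E] [NormedSpace ℝ E] : Prop :=
  ∃ T : C₀(ℕ, ℝ) →L[ℝ] E, ∃ c > 0, ∀ x, c * ‖x‖ ≤ ‖T x‖

/-- The canonical scalar function space associated to `H ⊆ C(K,E)`:
the closed linear span of `{e* ∘ h : e* ∈ E*, h ∈ H}`. -/
def scalarSpace {K : Type*} [TopologicalSpace K] [CompactSpace K]
    {E : Type*} [NormedAddCommGroup E] [NormedSpace ℝ E]
    (H : Submodule ℝ C(K, E)) : Submodule ℝ C(K, ℝ) :=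
  (Submodule.span ℝ {f : C(K, ℝ) | ∃ φ : E →L[ℝ] ℝ, ∃ h ∈ H,
      f = ⟨fun x => φ (h x), φ.continuous.comp (map_continuous h)⟩}).topologicalClosure

/-- The evaluation functional `i(x) : A → ℝ`, `h ↦ h x`. -/
def evalFun {K : Type*} [TopologicalSpace K] [CompactSpace K]
    (A : Submodule ℝ C(K, ℝ)) (x : K) : ↥A →L[ℝ] ℝ :=
  LinearMap.mkContinuous
    { toFun := fun h => (h : C(K, ℝ)) x
      map_add' := fun a b => rfl
      map_smul' := fun c a => rfl } 1
    (fun h => by simpa using (h : C(K, ℝ)).norm_coe_le_norm x)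

/-- The Choquet boundary of `H ⊆ C(K,E)`: points whose evaluation functional is an
extreme point of the dual unit ball of the associated scalar space. -/
def ChoquetBoundary {K : Type*} [TopologicalSpace K] [CompactSpace K]
    {E : Type*} [NormedAddCommGroup E] [NormedSpace ℝ E]
    (H : Submodule ℝ C(K, E)) : Set K :=
  {x | evalFun (scalarSpace H) x ∈
      Set.extremePoints ℝ (@Metric.closedBall (↥(scalarSpace H) →L[ℝ] ℝ)
        (ContinuousLinearMap.toSeminormedAddCommGroup (E := ↥(scalarSpace H)) (F := ℝ) (𝕜 := ℝ)
          (𝕜₂ := ℝ) (σ₁₂ := RingHom.id ℝ)).toPseudoMetricSpace (0 : ↥(scalarSpace H) →L[ℝ] ℝ) 1)}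

/-- `A^E`: elements `f` of the scalar space with `f ⊗ e ∈ H` for all `e`. -/
def AE {K : Type*} [TopologicalSpace K] [CompactSpace K]
    {E : Type*} [NormedAddCommGroup E] [NormedSpace ℝ E]
    (H : Submodule ℝ C(K, E)) : Set C(K, ℝ) :=
  {f | f ∈ scalarSpace H ∧ ∀ e : E, tensor f e ∈ H}

/-- Weak peak point of `H ⊆ C(K,E)`. -/
def IsWeakPeakPoint {K : Type*} [TopologicalSpace K] [CompactSpace K]
    {E : Type*} [NormedAddCommGroup E] [NormedSpace ℝ E]
    (H : Submodule ℝ C(K, E)) (x : K) : Prop :=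
  ∀ U ∈ nhds x, ∀ ε ∈ Set.Ioo (0 : ℝ) 1, ∃ f ∈ AE H,
    (∀ y, f y ∈ Set.Icc (0 : ℝ) 1) ∧ 1 - ε < f x ∧
      ∀ y ∈ ChoquetBoundary H \ U, f y < ε

/-- `Ω_H = { y : ∃ g ∈ H, g y ≠ 0 }`. -/
def OmegaSet {K : Type*} [TopologicalSpace K] [CompactSpace K]
    {E : Type*} [NormedAddCommGroup E] [NormedSpace ℝ E]
    (H : Submodule ℝ C(K, E)) : Set K :=
  {y | ∃ g ∈ H, (g : C(K, E)) y ≠ 0}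

/-! Evaluating `T (h i)` at `y` gives vectors `v i` of `E₂` with `ε < ‖v i‖` and, choosing the signs
`α i = sign (φ (v i))`, `∑ i ∈ s, |φ (v i)| ≤ ‖T‖ * C` for every `φ` in the unit ball of the dual:
the series `∑ v i` is weakly unconditionally Cauchy but does not converge. The copy of `c₀` is then
found as in Bessaga–Pełczyński. Being weakly null and bounded below, `v` keeps `ε / 4` away from
every finite-dimensional subspace, so Hahn–Banach in the quotient lets us choose inductively a
subsequence `w k = v (n k)` and functionals `φ k` of norm at most one that vanish on
`w 0, …, w (k - 1)`, with `ε / 4 ≤ φ k (w k)` and `∑ j > k, |φ k (w j)| ≤ ε / 8`. The map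
`x ↦ ∑ x k • w k` is bounded on `c₀` by the Cauchy constant, and testing against `φ k` shows
`ε / 8 * ‖x‖ ≤ ‖∑ x k • w k‖`. -/

open Filter Topology

theorem ZeroAtInftyContinuousMap.norm_le_iff {α : Type*} [TopologicalSpace α] (x : C₀(α, ℝ))
    {C : ℝ} (hC : 0 ≤ C) : ‖x‖ ≤ C ↔ ∀ a, |x a| ≤ C := by
  rw [← ZeroAtInftyContinuousMap.norm_toBCF_eq_norm, BoundedContinuousFunction.norm_le hC]
  rfl

theorem ZeroAtInftyContinuousMap.abs_apply_le_norm {α : Type*} [TopologicalSpace α]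
    (x : C₀(α, ℝ)) (a : α) : |x a| ≤ ‖x‖ :=
  (x.norm_le_iff (norm_nonneg x)).1 le_rfl a

section

variable {E : Type*} [NormedAddCommGroup E] [NormedSpace ℝ E]

/-- Weakly unconditionally Cauchy, with constant `M`. -/
def WUCWith (M : ℝ) (v : ℕ → E) : Prop :=
  ∀ φ : StrongDual ℝ E, ‖φ‖ ≤ 1 → ∀ s : Finset ℕ, ∑ i ∈ s, |φ (v i)| ≤ M

namespace WUCWith

variable {M : ℝ} {v : ℕ → E}

theorem nonneg (hv : WUCWith M v) : 0 ≤ M := by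
  simpa using hv 0 (by simp) ∅

theorem sum_abs_le (hv : WUCWith M v) (φ : StrongDual ℝ E) (s : Finset ℕ) :
    ∑ i ∈ s, |φ (v i)| ≤ M * ‖φ‖ := by
  rcases eq_or_ne φ 0 with rfl | hφ
  · simp
  have hφ' : 0 < ‖φ‖ := norm_pos_iff.2 hφ
  have h := hv (‖φ‖⁻¹ • φ) (by rw [norm_smul, norm_inv, norm_norm, inv_mul_cancel₀ hφ'.ne']) s
  simp only [smul_apply, _root_.smul_eq_mul, abs_mul, abs_inv, abs_norm, ← Finset.mul_sum] at h
  rwa [inv_mul_le_iff₀ hφ', mul_comm] at h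

theorem comp_injective (hv : WUCWith M v) {m : ℕ → ℕ} (hm : Function.Injective m) :
    WUCWith M (v ∘ m) := fun φ hφ s => by
  simpa [Finset.sum_image fun i _ j _ h => hm h] using hv φ hφ (s.image m)

theorem map {F : Type*} [NormedAddCommGroup F] [NormedSpace ℝ F] (hv : WUCWith M v)
    (L : E →L[ℝ] F) : WUCWith (‖L‖ * M) (L ∘ v) := fun φ hφ s =>
  calc ∑ i ∈ s, |φ (L (v i))| ≤ M * ‖φ.comp L‖ := hv.sum_abs_le (φ.comp L) s
    _ ≤ M * (1 * ‖L‖) := by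
      gcongr
      · exact hv.nonneg
      · exact (φ.opNorm_comp_le L).trans (by gcongr)
    _ = ‖L‖ * M := by ring

theorem norm_sum_smul_le (hv : WUCWith M v) (s : Finset ℕ) {a : ℕ → ℝ} {B : ℝ} (hB : 0 ≤ B)
    (ha : ∀ i ∈ s, |a i| ≤ B) : ‖∑ i ∈ s, a i • v i‖ ≤ M * B := by
  obtain ⟨φ, hφ, hφs⟩ := exists_dual_vector'' ℝ (∑ i ∈ s, a i • v i)
  calc ‖∑ i ∈ s, a i • v i‖ = ∑ i ∈ s, a i * φ (v i) := by
        simpa [map_sum, _root_.smul_eq_mul] using hφs.symm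
    _ ≤ ∑ i ∈ s, B * |φ (v i)| := Finset.sum_le_sum fun i hi =>
        (le_abs_self _).trans (by rw [abs_mul]; gcongr; exact ha i hi)
    _ ≤ M * B := by rw [← Finset.mul_sum, mul_comm M]; gcongr; exact hv φ hφ s

theorem norm_le (hv : WUCWith M v) (i : ℕ) : ‖v i‖ ≤ M := by
  simpa using hv.norm_sum_smul_le {i} (a := 1) zero_le_one (by simp)

theorem summable_abs (hv : WUCWith M v) (φ : StrongDual ℝ E) :
    Summable fun i => |φ (v i)| :=
  summable_of_sum_le (fun _ => abs_nonneg _) (hv.sum_abs_le φ)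

theorem tendsto_zero (hv : WUCWith M v) (φ : StrongDual ℝ E) :
    Tendsto (fun i => φ (v i)) atTop (𝓝 0) :=
  tendsto_zero_iff_abs_tendsto_zero _ |>.2 (hv.summable_abs φ).tendsto_atTop_zero

theorem eventually_sum_abs_le (hv : WUCWith M v) (φ : StrongDual ℝ E) {δ : ℝ} (hδ : 0 < δ) :
    ∀ᶠ N in atTop, ∀ t : Finset ℕ, (∀ i ∈ t, N ≤ i) → ∑ i ∈ t, |φ (v i)| ≤ δ := by
  obtain ⟨s, hs⟩ := summable_iff_vanishing_norm.1 (hv.summable_abs φ) δ hδ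
  obtain ⟨N, hN⟩ := s.exists_nat_subset_range
  refine eventually_atTop.2 ⟨N, fun n hn t ht => ?_⟩
  have hdisj : Disjoint t s := Finset.disjoint_left.2 fun i hit his =>
    (Finset.mem_range.1 (hN his)).not_ge (hn.trans (ht i hit))
  simpa [Real.norm_of_nonneg (Finset.sum_nonneg fun i _ => abs_nonneg (φ (v i)))]
    using (hs t hdisj).le

end WUCWith

theorem wucWith_of_norm_sum_signs_le {u : ℕ → E} {C : ℝ}
    (hC : ∀ n : ℕ, ∀ α : Fin n → ℝ, (∀ i, α i = 1 ∨ α i = -1) → ‖∑ i, α i • u i‖ ≤ C) :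
    WUCWith C u := by
  intro φ hφ s
  obtain ⟨n, hn⟩ := s.exists_nat_subset_range
  let α : Fin n → ℝ := fun i => if 0 ≤ φ (u i) then 1 else -1
  have hα : ∀ i, α i * φ (u i) = |φ (u i)| := fun i => by
    by_cases h : 0 ≤ φ (u i)
    · simp [α, h, abs_of_nonneg h]
    · simp [α, h, abs_of_neg (not_le.1 h)]
  calc ∑ i ∈ s, |φ (u i)| ≤ ∑ i ∈ Finset.range n, |φ (u i)| :=
        Finset.sum_le_sum_of_subset_of_nonneg hn fun _ _ _ => abs_nonneg _
    _ = φ (∑ i, α i • u i) := by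
        simp [Finset.sum_range fun i => |φ (u i)|, map_sum, ← hα]
    _ ≤ ‖∑ i, α i • u i‖ :=
        (le_abs_self _).trans ((φ.le_opNorm _).trans (mul_le_of_le_one_left (norm_nonneg _) hφ))
    _ ≤ C := hC n α fun i => by by_cases h : 0 ≤ φ (u i) <;> simp [α, h]

theorem exists_dual_le_apply_of_forall_mem_le_norm_sub (F : Submodule ℝ E) {x : E} {δ : ℝ}
    (hx : ∀ z ∈ F, δ ≤ ‖x - z‖) :
    ∃ φ : StrongDual ℝ E, ‖φ‖ ≤ 1 ∧ (∀ z ∈ F, φ z = 0) ∧ δ ≤ φ x := by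
  obtain ⟨g, hg, hgx⟩ := exists_dual_vector'' ℝ (F.mkQ x)
  refine ⟨g.comp F.mkQL, ?_, fun z hz => ?_, ?_⟩
  · refine ContinuousLinearMap.opNorm_le_bound _ zero_le_one fun z => ?_
    calc ‖g (F.mkQ z)‖ ≤ 1 * ‖F.mkQ z‖ := (g.le_opNorm _).trans (by gcongr)
      _ ≤ 1 * ‖z‖ := by gcongr; exact Submodule.Quotient.norm_mk_le F z
  · simp [(Submodule.Quotient.mk_eq_zero F).2 hz]
  · have hδ : δ ≤ ‖F.mkQ x‖ := QuotientAddGroup.le_norm_iff.2 fun m hm => by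
      have hmem : x - m ∈ F := by
        rw [← Submodule.Quotient.eq]
        exact hm.symm
      simpa using hx _ hmem
    exact hδ.trans_eq (by rw [ContinuousLinearMap.comp_apply, Submodule.mkQL_apply, hgx]; rfl)

/-- Testing `∑ x j • w j` against `φ k` recovers `|x k| * δ` up to an error `‖x‖ * (δ / 2)`. -/
structure AlmostBiorthogonal (δ : ℝ) (w : ℕ → E) (φ : ℕ → StrongDual ℝ E) : Prop where
  norm_le_one : ∀ k, ‖φ k‖ ≤ 1
  le_apply_self : ∀ k, δ ≤ φ k (w k)
  apply_of_lt : ∀ j k, j < k → φ k (w j) = 0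
  sum_abs_le : ∀ k (t : Finset ℕ), (∀ j ∈ t, k < j) → ∑ j ∈ t, |φ k (w j)| ≤ δ / 2

namespace WUCWith

variable {M : ℝ} {v : ℕ → E}

/-- Otherwise vectors of `F` close to the `v n` would, by compactness, accumulate at a vector of
norm at most `ε / 4`, because `v` is weakly null. -/
theorem frequently_forall_mem_le_norm_sub (hv : WUCWith M v) {ε : ℝ} (hε : 0 < ε)
    (hlow : ∀ i, ε < ‖v i‖) (F : Submodule ℝ E) [FiniteDimensional ℝ F] :
    ∃ᶠ n in atTop, ∀ z ∈ F, ε / 4 ≤ ‖v n - z‖ := by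
  by_contra hcon
  simp only [not_frequently, not_forall, not_le, exists_prop] at hcon
  obtain ⟨N, hN⟩ := eventually_atTop.1 hcon
  choose w hwF hw using fun n => hN (n + N) le_add_self
  let w' : ℕ → F := fun n => ⟨w n, hwF n⟩
  have hbdd : ∀ n, w' n ∈ Metric.closedBall (0 : F) (M + ε / 4) := fun n => by
    have h1 : ‖w n‖ ≤ ‖v (n + N)‖ + ‖v (n + N) - w n‖ := by
      simpa using norm_sub_le (v (n + N)) (v (n + N) - w n)
    have := hv.norm_le (n + N)
    have := hw n
    rw [mem_closedBall_zero_iff]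
    exact h1.trans (by linarith)
  obtain ⟨a, -, ψ, hψ, hlim⟩ := (isCompact_closedBall (0 : F) (M + ε / 4)).tendsto_subseq hbdd
  have hlim' : Tendsto (fun k => w (ψ k)) atTop (𝓝 (a : E)) :=
    (continuous_subtype_val.tendsto a).comp hlim
  have hshift : Tendsto (fun k => ψ k + N) atTop atTop :=
    (tendsto_add_atTop_nat N).comp hψ.tendsto_atTop
  have ha : ‖(a : E)‖ ≤ ε / 4 := by
    obtain ⟨φ, hφ, hφa⟩ := exists_dual_vector'' ℝ (a : E)
    have hφw : ∀ k, φ (w (ψ k)) ≤ φ (v (ψ k + N)) + ε / 4 := fun k => by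
      have h1 : -φ (v (ψ k + N) - w (ψ k)) ≤ ε / 4 :=
        (neg_le_abs _).trans <| (φ.le_opNorm _).trans <|
          (mul_le_of_le_one_left (norm_nonneg _) hφ).trans (hw (ψ k)).le
      rw [map_sub] at h1
      linarith
    have := le_of_tendsto_of_tendsto ((φ.continuous.tendsto _).comp hlim')
      (((hv.tendsto_zero φ).comp hshift).add_const (ε / 4)) (Eventually.of_forall hφw)
    simpa [hφa] using this
  obtain ⟨k, hk⟩ := (hlim'.eventually (Metric.ball_mem_nhds (a : E)
    (by positivity : (0 : ℝ) < ε / 4))).exists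
  have h3 : ‖v (ψ k + N)‖ ≤ ‖v (ψ k + N) - w (ψ k)‖ + ‖w (ψ k) - a‖ + ‖(a : E)‖ := by
    calc ‖v (ψ k + N)‖ = ‖(v (ψ k + N) - w (ψ k)) + (w (ψ k) - a) + a‖ := by abel_nf
      _ ≤ _ := norm_add₃_le
  have := hw (ψ k)
  rw [dist_eq_norm] at hk
  linarith [hlow (ψ k + N)]

theorem exists_almostBiorthogonal (hv : WUCWith M v) {ε : ℝ} (hε : 0 < ε)
    (hlow : ∀ i, ε < ‖v i‖) :
    ∃ n : ℕ → ℕ, StrictMono n ∧ ∃ φ, AlmostBiorthogonal (ε / 4) (v ∘ n) φ := by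
  classical
  obtain ⟨f, hP, hr⟩ := exists_seq_of_forall_finset_exists
    (fun p : ℕ × StrongDual ℝ E => ‖p.2‖ ≤ 1 ∧ ε / 4 ≤ p.2 (v p.1))
    (fun p q => p.1 < q.1 ∧ q.2 (v p.1) = 0 ∧
      ∀ t : Finset ℕ, (∀ i ∈ t, q.1 ≤ i) → ∑ i ∈ t, |p.2 (v i)| ≤ ε / 8)
    fun s _ => by
      let F := Submodule.span ℝ ((s.image fun p => v p.1 : Finset E) : Set E)
      have hfar := hv.frequently_forall_mem_le_norm_sub hε hlow F
      have hlate : ∀ᶠ N in atTop, ∀ p ∈ s, p.1 < N ∧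
          ∀ t : Finset ℕ, (∀ i ∈ t, N ≤ i) → ∑ i ∈ t, |p.2 (v i)| ≤ ε / 8 :=
        (eventually_all_finset s).2 fun p _ =>
          (eventually_gt_atTop p.1).and (hv.eventually_sum_abs_le p.2 (by positivity))
      obtain ⟨N, hNF, hN⟩ := (hfar.and_eventually hlate).exists
      obtain ⟨φ, hφ, hφF, hφN⟩ := exists_dual_le_apply_of_forall_mem_le_norm_sub F hNF
      refine ⟨(N, φ), ⟨hφ, hφN⟩, fun p hp => ⟨(hN p hp).1, hφF _ ?_, (hN p hp).2⟩⟩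
      exact Submodule.subset_span (Finset.mem_coe.2 (Finset.mem_image_of_mem _ hp))
  have hmono : StrictMono fun k => (f k).1 := strictMono_nat_of_lt_succ fun k =>
    (hr k (k + 1) k.lt_succ_self).1
  refine ⟨fun k => (f k).1, hmono, fun k => (f k).2,
    ⟨fun k => (hP k).1, fun k => (hP k).2, fun j k hjk => (hr j k hjk).2.1, fun k t ht => ?_⟩⟩
  calc ∑ j ∈ t, |(f k).2 (v (f j).1)| = ∑ i ∈ t.image fun j => (f j).1, |(f k).2 (v i)| :=
        by rw [Finset.sum_image fun i _ j _ h => hmono.injective h]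
    _ ≤ ε / 8 := (hr k (k + 1) k.lt_succ_self).2.2 _ fun i hi => by
        obtain ⟨j, hj, rfl⟩ := Finset.mem_image.1 hi
        exact hmono.monotone (ht j hj)
    _ = ε / 4 / 2 := by ring

end WUCWith

namespace AlmostBiorthogonal

variable {δ : ℝ} {w : ℕ → E} {φ : ℕ → StrongDual ℝ E}

theorem mul_sub_le_norm_sum (hφ : AlmostBiorthogonal δ w φ) {s : Finset ℕ} {k : ℕ} (hk : k ∈ s)
    {a : ℕ → ℝ} {B : ℝ} (ha : ∀ j ∈ s, |a j| ≤ B) :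
    |a k| * δ - B * (δ / 2) ≤ ‖∑ j ∈ s, a j • w j‖ := by
  have hB : 0 ≤ B := (abs_nonneg _).trans (ha k hk)
  have hsplit : φ k (∑ j ∈ s, a j • w j) =
      a k * φ k (w k) + ∑ j ∈ s.erase k, a j * φ k (w j) := by
    simp [map_sum, ← Finset.add_sum_erase s _ hk]
  have hlater : ∀ j ∈ s.erase k, a j * φ k (w j) ≠ 0 → k < j := fun j hj hne =>
    lt_of_le_of_ne (not_lt.1 fun hjk => hne (by rw [hφ.apply_of_lt j k hjk, mul_zero]))
      (Finset.ne_of_mem_erase hj).symm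
  have hrest : |∑ j ∈ s.erase k, a j * φ k (w j)| ≤ B * (δ / 2) :=
    calc |∑ j ∈ s.erase k, a j * φ k (w j)|
        = |∑ j ∈ s.erase k with k < j, a j * φ k (w j)| := by rw [Finset.sum_filter_of_ne hlater]
      _ ≤ ∑ j ∈ s.erase k with k < j, B * |φ k (w j)| :=
        (Finset.abs_sum_le_sum_abs _ _).trans <| Finset.sum_le_sum fun j hj => by
          rw [abs_mul]
          gcongr
          exact ha j (Finset.mem_of_mem_erase (Finset.mem_of_mem_filter j hj))
      _ ≤ B * (δ / 2) := by
        rw [← Finset.mul_sum]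
        gcongr
        exact hφ.sum_abs_le k _ fun j hj => (Finset.mem_filter.1 hj).2
  have hdiag : |a k| * δ ≤ |a k * φ k (w k)| := by
    rw [abs_mul]
    gcongr
    exact (hφ.le_apply_self k).trans (le_abs_self _)
  have hnorm : |φ k (∑ j ∈ s, a j • w j)| ≤ ‖∑ j ∈ s, a j • w j‖ :=
    ((φ k).le_opNorm _).trans (mul_le_of_le_one_left (norm_nonneg _) (hφ.norm_le_one k))
  rw [hsplit] at hnorm
  have htri := abs_add_le (a k * φ k (w k) + ∑ j ∈ s.erase k, a j * φ k (w j))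
    (-∑ j ∈ s.erase k, a j * φ k (w j))
  rw [add_neg_cancel_right, abs_neg] at htri
  linarith

end AlmostBiorthogonal

section Complete

variable [CompleteSpace E]

namespace WUCWith

variable {M : ℝ} {v : ℕ → E}

theorem summable_smul (hv : WUCWith M v) (x : C₀(ℕ, ℝ)) : Summable fun i => x i • v i := by
  refine summable_iff_vanishing_norm.2 fun δ hδ => ?_
  have hM : 0 < M + 1 := by linarith [hv.nonneg]
  have hx : Tendsto (fun i => |x i|) atTop (𝓝 0) :=
    (tendsto_zero_iff_abs_tendsto_zero _).1 (cocompact_eq_atTop (α := ℕ) ▸ zero_at_infty x)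
  obtain ⟨N, hN⟩ := eventually_atTop.1 (hx.eventually (gt_mem_nhds (div_pos hδ hM)))
  refine ⟨Finset.range N, fun t ht => ?_⟩
  calc ‖∑ i ∈ t, x i • v i‖ ≤ M * (δ / (M + 1)) :=
        hv.norm_sum_smul_le t (div_pos hδ hM).le fun i hi =>
          (hN i (not_lt.1 fun h => Finset.disjoint_left.1 ht hi (Finset.mem_range.2 h))).le
    _ < δ := by rw [mul_div_assoc', div_lt_iff₀ hM]; linarith

def tsumSMulCLM (hv : WUCWith M v) : C₀(ℕ, ℝ) →L[ℝ] E :=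
  LinearMap.mkContinuous
    { toFun := fun x => ∑' i, x i • v i
      map_add' := fun x y => by
        simp only [ZeroAtInftyContinuousMap.coe_add, Pi.add_apply, add_smul]
        exact (hv.summable_smul x).tsum_add (hv.summable_smul y)
      map_smul' := fun c x => by
        simp only [ZeroAtInftyContinuousMap.coe_smul, Pi.smul_apply, _root_.smul_eq_mul, mul_smul,
          RingHom.id_apply]
        exact (hv.summable_smul x).tsum_const_smul c }
    M fun x => le_of_tendsto' (hv.summable_smul x).hasSum.norm fun s =>
      hv.norm_sum_smul_le s (norm_nonneg x) fun i _ => x.abs_apply_le_norm i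

theorem hasSum_tsumSMulCLM (hv : WUCWith M v) (x : C₀(ℕ, ℝ)) :
    HasSum (fun i => x i • v i) (hv.tsumSMulCLM x) :=
  (hv.summable_smul x).hasSum

end WUCWith

namespace AlmostBiorthogonal

variable {δ : ℝ} {w : ℕ → E} {φ : ℕ → StrongDual ℝ E} {M : ℝ}

theorem abs_apply_mul_sub_le (hφ : AlmostBiorthogonal δ w φ) (hw : WUCWith M w)
    (x : C₀(ℕ, ℝ)) (k : ℕ) : |x k| * δ - ‖x‖ * (δ / 2) ≤ ‖hw.tsumSMulCLM x‖ :=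
  ge_of_tendsto (hw.hasSum_tsumSMulCLM x).tendsto_sum_nat.norm <| eventually_atTop.2
    ⟨k + 1, fun _ hN => hφ.mul_sub_le_norm_sum (Finset.mem_range.2 hN) fun j _ =>
      x.abs_apply_le_norm j⟩

theorem containsCopyOfC0 (hφ : AlmostBiorthogonal δ w φ) (hw : WUCWith M w) (hδ : 0 < δ) :
    ContainsCopyOfC0 E := by
  refine ⟨hw.tsumSMulCLM, δ / 2, half_pos hδ, fun x => ?_⟩
  have hx : ‖x‖ ≤ (‖hw.tsumSMulCLM x‖ + ‖x‖ * (δ / 2)) / δ :=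
    (x.norm_le_iff (by positivity)).2 fun k => by
      rw [le_div_iff₀ hδ]
      linarith [hφ.abs_apply_mul_sub_le hw x k]
  rw [le_div_iff₀ hδ] at hx
  linarith

end AlmostBiorthogonal

theorem WUCWith.containsCopyOfC0 {M : ℝ} {v : ℕ → E} (hv : WUCWith M v)
    {ε : ℝ} (hε : 0 < ε) (hlow : ∀ i, ε < ‖v i‖) : ContainsCopyOfC0 E := by
  obtain ⟨n, hn, φ, hφ⟩ := hv.exists_almostBiorthogonal hε hlow
  exact hφ.containsCopyOfC0 (hv.comp_injective hn.injective) (by positivity)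

end Complete

end

theorem stmt_3_general {K₁ K₂ : Type*} [TopologicalSpace K₁] [CompactSpace K₁]
    [TopologicalSpace K₂] [CompactSpace K₂]
    {E₁ E₂ : Type*} [NormedAddCommGroup E₁] [NormedSpace ℝ E₁]
    [NormedAddCommGroup E₂] [NormedSpace ℝ E₂] [CompleteSpace E₂]
    (H₁ : Submodule ℝ C(K₁, E₁))
    (H₂ : Submodule ℝ C(K₂, E₂))
    (T : ↥H₁ →L[ℝ] ↥H₂)
    (h : ℕ → ↥H₁)
    (C : ℝ)
    (hC : ∀ n : ℕ, ∀ α : Fin n → ℝ, (∀ i, α i = 1 ∨ α i = -1) →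
      ‖∑ i, α i • h i‖ < C)
    (y : K₂) (ε : ℝ) (hε : 0 < ε)
    (hbig : ∀ i : ℕ, ε < ‖(T (h i) : C(K₂, E₂)) y‖) :
    ContainsCopyOfC0 E₂ :=
  ((wucWith_of_norm_sum_signs_le fun n α hα => (hC n α hα).le).map
    ((ContinuousMap.evalCLM ℝ y).comp (H₂.subtypeL.comp T))).containsCopyOfC0 hε hbig

/-- Lemma 2.1 (c₀-lemma). -/
theorem stmt_3 {K₁ K₂ : Type*} [TopologicalSpace K₁] [CompactSpace K₁] [T2Space K₁]
    [TopologicalSpace K₂] [CompactSpace K₂] [T2Space K₂]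
    {E₁ E₂ : Type*} [NormedAddCommGroup E₁] [NormedSpace ℝ E₁] [CompleteSpace E₁]
    [NormedAddCommGroup E₂] [NormedSpace ℝ E₂] [CompleteSpace E₂]
    (H₁ : Submodule ℝ C(K₁, E₁)) (hH₁ : IsClosed (H₁ : Set C(K₁, E₁)))
    (H₂ : Submodule ℝ C(K₂, E₂)) (hH₂ : IsClosed (H₂ : Set C(K₂, E₂)))
    (T : ↥H₁ →L[ℝ] ↥H₂) (c : ℝ) (hc : 0 < c) (hT : ∀ h : ↥H₁, c * ‖h‖ ≤ ‖T h‖)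
    (e : E₁) (he : e ≠ 0) (f : ℕ → C(K₁, ℝ))
    (h : ℕ → ↥H₁) (hhf : ∀ i, (h i : C(K₁, E₁)) = tensor (f i) e)
    (C : ℝ)
    (hC : ∀ n : ℕ, ∀ α : Fin n → ℝ, (∀ i, α i = 1 ∨ α i = -1) →
      ‖∑ i, α i • h i‖ < C)
    (y : K₂) (ε : ℝ) (hε : 0 < ε)
    (hbig : ∀ i : ℕ, ε < ‖(T (h i) : C(K₂, E₂)) y‖) :
    ContainsCopyOfC0 E₂ :=
  stmt_3_general H₁ H₂ T h C hC y ε hε hbig
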